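/- Let R be a tree, A ⊆ Ω[R] a dendroidal subset, and F an extension set with respect to A (satisfying axioms F1–F5). Fix a planar structure on R, inducing compatible total orders on the sets of F-faces 𝔉_F(P) and F-extensions 𝔈_F(P) of each missing face P. Call a pair (∂_f P, P) a canonical extension if ∂_f = min 𝔉_F(P) and ∂_f = min 𝔈_F(∂_f P). Then: (1) two canonical extensions (∂_{f₁}P₁, P₁) and (∂_{f₂}P₂, P₂) satisfy P₁ = P₂ iff ∂_{f₁}P₁ = ∂_{f₂}P₂; (2) the pairs (∂_g∂_f P, ∂_f P) and (∂_f P, P) cannot both be canonical extensions. -/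

import Mathlib

/-- A "pre-tree": a candidate subtree (face) of an ambient tree `T`, given by its
set of edges and the set of outputs of its vertices. -/
structure PreTree (T : Type) where
  edges : Set T
  vert : Set T

variable {T : Type} [PartialOrder T]

/-- `x` is an input of the vertex of `Q` with output `o`. -/
def InputOf (Q : PreTree T) (x o : T) : Prop :=
  x ∈ Q.edges ∧ o < x ∧ ¬∃ y ∈ Q.edges, o < y ∧ y < x

/-- The set of inputs of the vertex of `Q` with output `o`. -/
def Inps (Q : PreTree T) (o : T) : Set T := {x | InputOf Q x o}

/-- `x` is a leaf of `Q`: an edge carrying no vertex. -/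
def IsLeafOf (Q : PreTree T) (x : T) : Prop := x ∈ Q.edges ∧ x ∉ Q.vert

/-- `r` is the root edge of `Q`. -/
def RootOf (Q : PreTree T) (r : T) : Prop := r ∈ Q.edges ∧ ∀ x ∈ Q.edges, r ≤ x

/-- `e` is an inner edge of `Q`: it carries a vertex and is an input of a vertex. -/
def InnerE (Q : PreTree T) (e : T) : Prop := e ∈ Q.vert ∧ ∃ o ∈ Q.vert, InputOf Q e o

/-- `(X; t)` is an operation of the (pre-)tree `Q`: every leaf of `Q` above `t` is
above exactly one element of `X` and every stump of `Q` above `t` is above at most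
one element of `X`. -/
def IsOpIn (Q : PreTree T) (X : Set T) (t : T) : Prop :=
  X ⊆ Q.edges ∧ t ∈ Q.edges ∧ (∀ x ∈ X, t < x) ∧
  (∀ l, IsLeafOf Q l → t ≤ l → ∃! x, x ∈ X ∧ x ≤ l) ∧
  (∀ o ∈ Q.vert, Inps Q o = ∅ → t ≤ o →
    ∀ x₁ ∈ X, ∀ x₂ ∈ X, x₁ ≤ o → x₂ ≤ o → x₁ = x₂)

/-- `P` is a subtree (face) of `Q`: edges and vertices of `P` are among those of
`Q`, and each vertex of `P` is an operation of `Q`. -/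
def SubtreeRel (P Q : PreTree T) : Prop :=
  P.edges ⊆ Q.edges ∧ P.vert ⊆ Q.vert ∧ ∀ o ∈ P.vert, IsOpIn Q (Inps P o) o

/-- The ambient tree `T` with leaf set `L`, viewed as a pre-tree. -/
def fullTree (L : Set T) : PreTree T := ⟨Set.univ, {e | e ∉ L}⟩

/-- `P` is a face of the ambient tree `T` with leaf set `L`. -/
def IsFace (L : Set T) (P : PreTree T) : Prop :=
  P.edges.Nonempty ∧ (∃ r, RootOf P r) ∧
  P.vert ⊆ P.edges ∧ (∀ e ∈ P.vert, e ∉ L) ∧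
  (∀ e ∈ P.edges, (∃ x ∈ P.edges, e < x) → e ∈ P.vert) ∧
  SubtreeRel P (fullTree L)

/-- Number of vertices of a pre-tree. -/
noncomputable def nv (P : PreTree T) : ℕ := P.vert.ncard

/-- Labels for elementary face maps: inner faces, top faces (a top vertex `w` with
output `o`), and bottom faces (the bottom vertex `v` with output the root `r`,
keeping the subtree above the input `e`). -/
inductive FLbl (T : Type) where
  | inner (e : T)
  | top (w : Set T) (o : T)
  | bot (v : Set T) (r : T) (e : T)

/-- `ElemF f P Q` : `P` is obtained from `Q` by the elementary face map labelled
`f`, i.e. there is an elementary face map `∂_f : P → Q`. -/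
def ElemF (f : FLbl T) (P Q : PreTree T) : Prop :=
  match f with
  | .inner e => InnerE Q e ∧ P.edges = Q.edges \ {e} ∧ P.vert = Q.vert \ {e}
  | .top w o => o ∈ Q.vert ∧ w = Inps Q o ∧ (∀ x ∈ w, x ∉ Q.vert) ∧
      P.edges = Q.edges \ w ∧ P.vert = Q.vert \ {o}
  | .bot v r e => RootOf Q r ∧ r ∈ Q.vert ∧ v = Inps Q r ∧ e ∈ v ∧
      (∀ x ∈ v, x ≠ e → x ∉ Q.vert) ∧
      P.edges = {x ∈ Q.edges | e ≤ x} ∧ P.vert = Q.vert \ {r}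

/-- `IsSeq L P ms Q` : `ms` is a sequence of composable elementary face maps
between faces, going up from `P` to `Q` (an extension sequence of `P` to `Q`). -/
def IsSeq (L : Set T) : PreTree T → List (FLbl T × PreTree T × PreTree T) → PreTree T → Prop
  | P, [], Q => P = Q
  | P, m :: ms, Q =>
      m.2.1 = P ∧ ElemF m.1 m.2.1 m.2.2 ∧ IsFace L m.2.1 ∧ IsFace L m.2.2 ∧
      IsSeq L m.2.2 ms Q

/-- `x` is attached to the vertex of `Q` with output `o`. -/
def AttachedTo (Q : PreTree T) (x o : T) : Prop := x = o ∨ InputOf Q x o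

/-- `f` is the label of an outer (top or bottom) vertex of `Q` with output `o`. -/
def OuterLbl (Q : PreTree T) (f : FLbl T) (o : T) : Prop :=
  f = FLbl.top (Inps Q o) o ∨ (∃ e, f = FLbl.bot (Inps Q o) o e ∧ RootOf Q o)

/-- `f` is an outer vertex face label and `g` the inner face label of the unique
inner edge of `Q` attached to that vertex. -/
def MixedOrd (f g : FLbl T) (Q : PreTree T) : Prop :=
  ∃ e o, g = FLbl.inner e ∧ InnerE Q e ∧ OuterLbl Q f o ∧ AttachedTo Q e o ∧
    (∀ e', InnerE Q e' → AttachedTo Q e' o → e' = e)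

/-- `{∂_f, ∂_g}` is a mixed pair of elementary face maps of `Q`. -/
def MixedPair (f g : FLbl T) (Q : PreTree T) : Prop := MixedOrd f g Q ∨ MixedOrd g f Q

/-- A bad pair of (labels of) elementary face maps: two distinct top vertices with
the same output edge, or two distinct bottom vertices attached to the same unique
inner edge. -/
def BadPair (f g : FLbl T) : Prop :=
  f ≠ g ∧
  ((∃ w w' o, f = FLbl.top w o ∧ g = FLbl.top w' o) ∨
   (∃ v v' r r' e, f = FLbl.bot v r e ∧ g = FLbl.bot v' r' e))

/-- `∂_g : P → P₁` and `∂_f : P₁ → Q` form an adjacent pair of elementary face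
maps: either `{∂_v, ∂_w}` or `{∂_e, ∂_{w∘ₑv}}` for an inner edge `e` attached to a
top vertex `v` and a vertex `w` all of whose other inputs are leaves, or the
analogous configurations with the bottom vertex. -/
def AdjacentComp (g f : FLbl T) (P₁ Q : PreTree T) : Prop :=
  (∃ e o, InnerE Q e ∧ (∀ x, InputOf Q x e → IsLeafOf Q x) ∧ o ∈ Q.vert ∧
     InputOf Q e o ∧ (∀ x, InputOf Q x o → x ≠ e → IsLeafOf Q x) ∧
     (f = FLbl.top (Inps Q e) e ∨ f = FLbl.inner e) ∧ g = FLbl.top (Inps P₁ o) o)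
  ∨
  (∃ r e, RootOf Q r ∧ r ∈ Q.vert ∧ InputOf Q e r ∧
     (∀ x, InputOf Q x r → x ≠ e → IsLeafOf Q x) ∧
     e ∈ Q.vert ∧ (∀ x, InputOf Q x e → IsLeafOf Q x) ∧
     ((∃ x, f = FLbl.bot (Inps Q r) r e ∧ g = FLbl.bot (Inps P₁ e) e x) ∨
      (∃ x, f = FLbl.inner e ∧ g = FLbl.bot (Inps P₁ r) r x)))

/-- `F` is an extension set with respect to the dendroidal subset of `Ω[T]` whose
missing faces are `Missing`: a set of elementary face maps between missing faces
satisfying the five axioms (F1)–(F5). -/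
def ExtSet (L : Set T) (Missing : Set (PreTree T))
    (F : Set (FLbl T × PreTree T × PreTree T)) : Prop :=
  -- F consists of elementary face maps between missing faces
  (∀ m ∈ F, ElemF m.1 m.2.1 m.2.2 ∧ IsFace L m.2.1 ∧ IsFace L m.2.2 ∧
      m.2.1 ∈ Missing ∧ m.2.2 ∈ Missing) ∧
  -- (F1) no mixed pair
  (¬ ∃ f g P' P'' P, (f, P', P) ∈ F ∧ (g, P'', P) ∈ F ∧ MixedPair f g P) ∧
  -- (F1) no bad pair
  (¬ ∃ f g P P₁ P₂, (f, P, P₁) ∈ F ∧ (g, P, P₂) ∈ F ∧ BadPair f g) ∧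
  -- (F1) no adjacent pair
  (¬ ∃ f g P P₁ Q, (g, P, P₁) ∈ F ∧ (f, P₁, Q) ∈ F ∧ AdjacentComp g f P₁ Q) ∧
  -- (F2) the Bad Pair Axiom
  (∀ g P P', ElemF g P P' → IsFace L P → IsFace L P' → (g, P, P') ∉ F →
    ∀ f₁ P₁ f₂ P₂, (f₁, P, P₁) ∈ F → (f₂, P, P₂) ∈ F →
      BadPair f₁ g → BadPair f₂ g → f₁ = f₂ ∧ P₁ = P₂) ∧
  -- (F3) the Face Closure Axiom
  (∀ f g P Pf Pg Pfg, ElemF f Pf P → ElemF g Pg P → ElemF g Pfg Pf → ElemF f Pfg Pg →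
    IsFace L P → IsFace L Pf → IsFace L Pg → IsFace L Pfg →
    ((f, Pfg, Pg) ∈ F ∨ (f, Pf, P) ∈ F) → ((g, Pfg, Pf) ∈ F ∨ (g, Pg, P) ∈ F) →
    ((f, Pfg, Pg) ∈ F ∧ (f, Pf, P) ∈ F ∧ (g, Pfg, Pf) ∈ F ∧ (g, Pg, P) ∈ F)) ∧
  -- (F4) the Extension Closure Axiom
  (∀ f P P', (f, P, P') ∈ F → ∀ g P'', ElemF g P P'' → IsFace L P'' →
    ∀ U, (IsFace L U ∧ ∃ s₁ s₂, IsSeq L P' s₁ U ∧ IsSeq L P'' s₂ U ∧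
            s₁.length = s₂.length ∧ 1 ≤ s₁.length) →
      (∀ U', (IsFace L U' ∧ ∃ s₁ s₂, IsSeq L P' s₁ U' ∧ IsSeq L P'' s₂ U' ∧
                s₁.length = s₂.length ∧ 1 ≤ s₁.length) → SubtreeRel U' U → U' = U) →
      ∀ s, IsSeq L P'' s U → ∀ m ∈ s, m ∈ F) ∧
  -- (F5) the Existence Axiom
  (∀ P ∈ Missing, IsFace L P → (∃ f P', (f, P', P) ∈ F) ∨ (∃ f P', (f, P, P') ∈ F))

/-- `(Q, P)` is a canonical extension: an `F`-map `∂_f : Q → P` such that `f` is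
the least element of the set of `F`-faces of `P` and the least element of the set
of `F`-extensions of `Q`, with respect to the total order `pord` on labels induced
by the planar structure. -/
def Canon (F : Set (FLbl T × PreTree T × PreTree T))
    (pord : FLbl T → FLbl T → Prop) (Q P : PreTree T) : Prop :=
  ∃ f, (f, Q, P) ∈ F ∧ (∀ g P', (g, P', P) ∈ F → pord f g) ∧
    (∀ g P', (g, Q, P') ∈ F → pord f g)


/-!
(1) The label of a canonical extension `∂_f : Q → P` is the least `F`-face of `P` and the least
`F`-extension of `Q`, and an elementary face map is determined by its label together with its
source, or together with its target; so either end determines the other.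

(2) Let `∂_g : R → Q` and `∂_f : Q → P` both be canonical. A case analysis over the three kinds
of labels shows that the composite `R → Q → P` is always resolved in one of three ways: it is one
side of a commuting square `R → X → P` with the labels swapped, or `{∂_g, ∂_f}` is an adjacent pair,
or there is an elementary face `∂_h : X → P` forming a mixed pair with `∂_f`, with `R ⊆ X` and
`Q ∪ X = P`. (F1) rules out the adjacent pair directly, and the mixed pair once (F4) has put `∂_h`
into `F`. In a square, (F3) puts `∂_g : X → P` and `∂_f : R → X` into `F`; minimality of `f` among
the `F`-faces of `P` and of `g` among the `F`-extensions of `R` give `f = g`, but the same label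
cannot occur twice in a row.
-/

variable (T) in
def IicIsChain : Prop := ∀ e s t : T, s ≤ e → t ≤ e → s ≤ t ∨ t ≤ s

attribute [ext] PreTree

/-- Defined for every label; when `f` labels an elementary face map `∂_f : A → P`, then
`A = f.face P` (`ElemF.eq_face`). -/
def FLbl.face : FLbl T → PreTree T → PreTree T
  | .inner e, P => ⟨P.edges \ {e}, P.vert \ {e}⟩
  | .top w o, P => ⟨P.edges \ w, P.vert \ {o}⟩
  | .bot _ r e, P => ⟨{x ∈ P.edges | e ≤ x}, P.vert \ {r}⟩

section Basic

variable {L : Set T} {A B P : PreTree T} {e o r r' x y z : T}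

lemma RootOf.unique (h : RootOf P r) (h' : RootOf P r') : r = r' :=
  le_antisymm (h.2 r' h'.1) (h'.2 r h.1)

lemma RootOf.of_subset (h : RootOf B r) (hAB : A.edges ⊆ B.edges) (hr : r ∈ A.edges) :
    RootOf A r :=
  ⟨hr, fun x hx => h.2 x (hAB hx)⟩

lemma InputOf.of_subset (hAB : A.edges ⊆ B.edges) (h : InputOf B x o) (hx : x ∈ A.edges) :
    InputOf A x o :=
  ⟨hx, h.2.1, fun ⟨y, hy, h1, h2⟩ => h.2.2 ⟨y, hAB hy, h1, h2⟩⟩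

lemma InputOf.of_superset (hAB : A.edges ⊆ B.edges) (h : InputOf A x o)
    (hmid : ∀ z ∈ B.edges, o < z → z < x → z ∈ A.edges) : InputOf B x o :=
  ⟨hAB h.1, h.2.1, fun ⟨z, hz, h1, h2⟩ => h.2.2 ⟨z, hmid z hz h1 h2, h1, h2⟩⟩

lemma InputOf.not_le (hx : InputOf B x o) (hy : InputOf B y o) (hne : x ≠ y) : ¬ x ≤ y :=
  fun hle => hy.2.2 ⟨x, hx.1, hx.2.1, lt_of_le_of_ne hle hne⟩

lemma InputOf.lt_of_lt (hch : IicIsChain T) (hx : InputOf B x o) (hy : y ∈ B.edges)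
    (hyx : y < x) (hne : y ≠ o) : y < o :=
  (hch x y o hyx.le hx.2.1.le).elim (lt_of_le_of_ne · hne) fun hc =>
    (hx.2.2 ⟨y, hy, lt_of_le_of_ne hc hne.symm, hyx⟩).elim

lemma InputOf.not_le_of_le (hch : IicIsChain T) (hx : InputOf B x o) (hy : InputOf B y o)
    (hne : x ≠ y) (hxz : x ≤ z) : ¬ y ≤ z :=
  fun hyz => (hch z x y hxz hyz).elim (hx.not_le hy hne) (hy.not_le hx hne.symm)

lemma exists_inputOf_le [Finite T] (hx : x ∈ B.edges) (hlt : o < x) :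
    ∃ y, InputOf B y o ∧ y ≤ x := by
  obtain ⟨m, hm⟩ :=
    (Set.toFinite {z | z ∈ B.edges ∧ o < z ∧ z ≤ x}).exists_minimal ⟨x, hx, hlt, le_rfl⟩
  exact ⟨m, ⟨hm.1.1, hm.1.2.1, fun ⟨y, hy, h1, h2⟩ =>
    hm.not_lt ⟨hy, h1, h2.le.trans hm.1.2.2⟩ h2⟩, hm.1.2.2⟩

lemma IsFace.vert_subset (hB : IsFace L B) : B.vert ⊆ B.edges := hB.2.2.1

lemma IsFace.mem_vert_of_lt (hB : IsFace L B) (hx : x ∈ B.edges) (hy : y ∈ B.edges)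
    (hlt : x < y) : x ∈ B.vert :=
  hB.2.2.2.2.1 x hx ⟨y, hy, hlt⟩

lemma IsFace.isOpIn (hB : IsFace L B) : ∀ o ∈ B.vert, IsOpIn (fullTree L) (Inps B o) o :=
  hB.2.2.2.2.2.2.2

lemma IsFace.of_vert_subset (hB : IsFace L B) (hAB : A.vert ⊆ B.vert) (hr : RootOf A r)
    (hvert : A.vert ⊆ A.edges) (hfull : ∀ e ∈ A.edges, (∃ x ∈ A.edges, e < x) → e ∈ A.vert)
    (hops : ∀ o ∈ A.vert, IsOpIn (fullTree L) (Inps A o) o) : IsFace L A :=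
  ⟨⟨r, hr.1⟩, ⟨r, hr⟩, hvert, fun e he => hB.2.2.2.1 e (hAB he), hfull, Set.subset_univ _,
    fun e he => hB.2.2.2.1 e (hAB he), hops⟩

lemma IsOpIn.sdiff_union {X Y : Set T} {t : T} (hX : IsOpIn B X t) (he : e ∈ X)
    (hY : IsOpIn B Y e) : IsOpIn B ((X \ {e}) ∪ Y) t := by
  obtain ⟨hXsub, htB, hXlt, hXleaf, hXst⟩ := hX
  obtain ⟨hYsub, -, hYlt, hYleaf, hYst⟩ := hY
  refine ⟨Set.union_subset (Set.sdiff_subset.trans hXsub) hYsub, htB, ?_, ?_, ?_⟩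
  · rintro x (⟨hx, -⟩ | hx)
    · exact hXlt x hx
    · exact (hXlt e he).trans (hYlt x hx)
  · intro l hl ht
    obtain ⟨x, ⟨hxX, hxl⟩, hux⟩ := hXleaf l hl ht
    by_cases hxe : x = e
    · subst hxe
      obtain ⟨y, ⟨hyY, hyl⟩, huy⟩ := hYleaf l hl hxl
      refine ⟨y, ⟨Or.inr hyY, hyl⟩, ?_⟩
      rintro z ⟨⟨hzX, hze⟩ | hzY, hzl⟩
      · exact absurd (hux z ⟨hzX, hzl⟩) hze
      · exact huy z ⟨hzY, hzl⟩
    · refine ⟨x, ⟨Or.inl ⟨hxX, hxe⟩, hxl⟩, ?_⟩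
      rintro z ⟨⟨hzX, hze⟩ | hzY, hzl⟩
      · exact hux z ⟨hzX, hzl⟩
      · exact absurd (hux e ⟨he, (hYlt z hzY).le.trans hzl⟩).symm hxe
  · intro o ho hstump hto x₁ hx₁ x₂ hx₂ h₁ h₂
    have hY_le : ∀ x ∈ Y, x ≤ o → e ≤ o := fun x hx h => (hYlt x hx).le.trans h
    rcases hx₁ with ⟨hx₁, hx₁e⟩ | hx₁ <;> rcases hx₂ with ⟨hx₂, hx₂e⟩ | hx₂
    · exact hXst o ho hstump hto x₁ hx₁ x₂ hx₂ h₁ h₂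
    · exact absurd (hXst o ho hstump hto x₁ hx₁ e he h₁ (hY_le x₂ hx₂ h₂)) hx₁e
    · exact absurd (hXst o ho hstump hto x₂ hx₂ e he h₂ (hY_le x₁ hx₁ h₁)) hx₂e
    · exact hYst o ho hstump (hY_le x₁ hx₁ h₁) x₁ hx₁ x₂ hx₂ h₁ h₂

end Basic

lemma FLbl.face_comm (f g : FLbl T) (P : PreTree T) : f.face (g.face P) = g.face (f.face P) := by
  cases f <;> cases g <;> ext x <;> simp only [FLbl.face, Set.mem_sdiff, Set.mem_ofPred_eq] <;>
    tauto

section ElemF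

variable {L : Set T} {f : FLbl T} {A B B' : PreTree T} {v w : Set T} {e o o₀ r x : T}

lemma ElemF.eq_face (h : ElemF f A B) : A = f.face B := by
  cases f with
  | inner e => exact PreTree.ext h.2.1 h.2.2
  | top w o => exact PreTree.ext h.2.2.2.1 h.2.2.2.2
  | bot v r e => exact PreTree.ext h.2.2.2.2.2.1 h.2.2.2.2.2.2

lemma ElemF.edges_subset (h : ElemF f A B) : A.edges ⊆ B.edges := by
  rw [h.eq_face]
  cases f <;> exact fun x hx => hx.1

lemma ElemF.exists_vert_eq (h : ElemF f A B) : ∃ x ∈ B.vert, A.vert = B.vert \ {x} := by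
  cases f with
  | inner e => exact ⟨e, h.1.1, h.2.2⟩
  | top w o => exact ⟨o, h.1, h.2.2.2.2⟩
  | bot v r e => exact ⟨r, h.2.1, h.2.2.2.2.2.2⟩

lemma ElemF.vert_subset (h : ElemF f A B) : A.vert ⊆ B.vert := by
  obtain ⟨x, -, hv⟩ := h.exists_vert_eq
  rw [hv]
  exact Set.sdiff_subset

lemma ElemF.nv_add_one [Finite T] (h : ElemF f A B) : nv A + 1 = nv B := by
  obtain ⟨x, hx, hv⟩ := h.exists_vert_eq
  rw [nv, nv, hv]
  exact Set.ncard_sdiff_singleton_add_one hx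

lemma ElemF.not_elemF (h : ElemF f A B) (hA : IsFace L A) {A' : PreTree T} :
    ¬ ElemF f A' A := by
  intro h'
  cases f with
  | inner e => exact (h.2.1 ▸ hA.vert_subset h'.1.1 : e ∈ B.edges \ {e}).2 rfl
  | top w o => exact (h.2.2.2.2 ▸ h'.1 : o ∈ B.vert \ {o}).2 rfl
  | bot v r e => exact (h.2.2.2.2.2.2 ▸ h'.2.1 : r ∈ B.vert \ {r}).2 rfl

lemma ElemF.inps_of_bot (h : ElemF (.bot v r e) A B) (ho : e ≤ o) : Inps A o = Inps B o := by
  obtain ⟨-, -, -, -, -, hE, -⟩ := id h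
  ext x
  constructor
  · intro hx
    exact hx.of_superset h.edges_subset fun z hz h1 _ => by rw [hE]; exact ⟨hz, ho.trans h1.le⟩
  · intro hx
    exact hx.of_subset h.edges_subset (by rw [hE]; exact ⟨hx.1, ho.trans hx.2.1.le⟩)

lemma ElemF.inps_of_top (hch : IicIsChain T) (h : ElemF (.top w o₀) A B) (hB : IsFace L B)
    (ho : o ∈ B.edges) (hne : o ≠ o₀) : Inps A o = Inps B o := by
  obtain ⟨ho₀, rfl, -, hE, -⟩ := id h
  have ho₀B : o₀ ∈ B.edges := hB.vert_subset ho₀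
  have ho₀A : o₀ ∈ A.edges := by rw [hE]; exact ⟨ho₀B, fun hc => lt_irrefl o₀ hc.2.1⟩
  ext x
  constructor
  · intro hx
    refine hx.of_superset h.edges_subset fun z hz h1 h2 => ?_
    rw [hE]
    refine ⟨hz, fun hzw => ?_⟩
    have hoo₀ := InputOf.lt_of_lt hch hzw ho h1 hne
    exact hx.2.2 ⟨o₀, ho₀A, hoo₀, hzw.2.1.trans h2⟩
  · intro hx
    refine hx.of_subset h.edges_subset ?_
    rw [hE]
    refine ⟨hx.1, fun hxw => ?_⟩
    exact hx.2.2 ⟨o₀, ho₀B, InputOf.lt_of_lt hch hxw ho hx.2.1 hne, hxw.2.1⟩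

lemma ElemF.inps_of_inner [Finite T] (h : ElemF (.inner e) A B) (hB : IsFace L B)
    (hne : e ∉ Inps B o) : Inps A o = Inps B o := by
  obtain ⟨⟨hev, -⟩, hE, -⟩ := id h
  ext x
  constructor
  · intro hx
    refine hx.of_superset h.edges_subset fun z hz h1 h2 => ?_
    rw [hE]
    refine ⟨hz, ?_⟩
    rintro rfl
    obtain ⟨y, hy, hyz⟩ := exists_inputOf_le (hB.vert_subset hev) h1
    have hyz : y < z := lt_of_le_of_ne hyz fun hc => hne (hc ▸ hy)
    exact hx.2.2 ⟨y, by rw [hE]; exact ⟨hy.1, hyz.ne⟩, hy.2.1, hyz.trans h2⟩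
  · intro hx
    exact hx.of_subset h.edges_subset (by rw [hE]; exact ⟨hx.1, fun hc => hne (hc ▸ hx)⟩)

lemma ElemF.inps_of_inner_merge (hch : IicIsChain T) (h : ElemF (.inner e) A B)
    (he : e ∈ Inps B o) : Inps A o = (Inps B o \ {e}) ∪ Inps B e := by
  obtain ⟨-, hE, -⟩ := id h
  have hAB := h.edges_subset
  have heA : e ∉ A.edges := by rw [hE]; exact fun hc => hc.2 rfl
  ext x
  constructor
  · intro hx
    have hxe : x ≠ e := by rintro rfl; exact heA hx.1
    by_cases hlt : e < x
    · refine Or.inr ⟨hAB hx.1, hlt, fun ⟨z, hz, h1, h2⟩ => hx.2.2 ⟨z, ?_, he.2.1.trans h1, h2⟩⟩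
      rw [hE]; exact ⟨hz, h1.ne'⟩
    · refine Or.inl ⟨hx.of_superset hAB fun z hz h1 h2 => ?_, hxe⟩
      rw [hE]; exact ⟨hz, by rintro rfl; exact hlt h2⟩
  · rintro (⟨hx, hxe⟩ | hx)
    · exact hx.of_subset hAB (by rw [hE]; exact ⟨hx.1, hxe⟩)
    · refine ⟨by rw [hE]; exact ⟨hx.1, hx.2.1.ne'⟩, he.2.1.trans hx.2.1, ?_⟩
      rintro ⟨z, hz, h1, h2⟩
      have hze : z ≠ e := by rintro rfl; exact heA hz
      rcases hch x z e h2.le hx.2.1.le with hc | hc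
      · exact he.2.2 ⟨z, hAB hz, h1, lt_of_le_of_ne hc hze⟩
      · exact hx.2.2 ⟨z, hAB hz, lt_of_le_of_ne hc hze.symm, h2⟩

lemma ElemF.mem_of_bot_of_not_le [Finite T] (h : ElemF (.bot v r e) A B) (hB : IsFace L B)
    (hx : x ∈ B.edges) (hxr : x ≠ r) (hex : ¬ e ≤ x) : x ∈ v \ {e} ∧ x ∉ B.vert := by
  obtain ⟨hr, -, rfl, -, hcond, -⟩ := h
  obtain ⟨y, hy, hyx⟩ := exists_inputOf_le hx (lt_of_le_of_ne (hr.2 x hx) (Ne.symm hxr))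
  have hye : y ≠ e := by rintro rfl; exact hex hyx
  have hyv : y ∉ B.vert := hcond y hy hye
  obtain rfl : y = x := hyx.eq_of_not_lt fun hlt => hyv (hB.mem_vert_of_lt hy.1 hx hlt)
  exact ⟨⟨hy, hye⟩, hyv⟩

lemma ElemF.le_of_bot_of_mem_vert [Finite T] (h : ElemF (.bot v r e) A B) (hB : IsFace L B)
    (hx : x ∈ B.vert) (hxr : x ≠ r) : e ≤ x :=
  by_contra fun hex => (h.mem_of_bot_of_not_le hB (hB.vert_subset hx) hxr hex).2 hx

lemma ElemF.eq_of_inner (h : ElemF (.inner e) A B) (hB : IsFace L B) :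
    B = ⟨insert e A.edges, insert e A.vert⟩ := by
  obtain ⟨⟨hev, -⟩, hE, hV⟩ := h
  ext1
  · rw [hE, Set.insert_sdiff_singleton, Set.insert_eq_of_mem (hB.vert_subset hev)]
  · rw [hV, Set.insert_sdiff_singleton, Set.insert_eq_of_mem hev]

lemma ElemF.eq_of_top (h : ElemF (.top w o) A B) : B = ⟨A.edges ∪ w, insert o A.vert⟩ := by
  obtain ⟨hov, rfl, -, hE, hV⟩ := h
  ext1
  · rw [hE, Set.sdiff_union_of_subset fun _ hx => hx.1]
  · rw [hV, Set.insert_sdiff_singleton, Set.insert_eq_of_mem hov]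

lemma ElemF.eq_of_bot [Finite T] (h : ElemF (.bot v r e) A B) (hB : IsFace L B) :
    B = ⟨A.edges ∪ insert r (v \ {e}), insert r A.vert⟩ := by
  obtain ⟨hr, hrv, rfl, -, -, hE, hV⟩ := id h
  ext1
  · ext x
    rw [hE]
    constructor
    · intro hx
      by_cases hex : e ≤ x
      · exact Or.inl ⟨hx, hex⟩
      by_cases hxr : x = r
      · exact Or.inr (Or.inl hxr)
      · exact Or.inr (Or.inr (h.mem_of_bot_of_not_le hB hx hxr hex).1)
    · rintro (hx | rfl | hx)
      exacts [hx.1, hr.1, hx.1.1]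
  · rw [hV, Set.insert_sdiff_singleton, Set.insert_eq_of_mem hrv]

lemma ElemF.right_unique [Finite T] (h : ElemF f A B) (h' : ElemF f A B') (hB : IsFace L B)
    (hB' : IsFace L B') : B = B' := by
  cases f with
  | inner e => rw [h.eq_of_inner hB, h'.eq_of_inner hB']
  | top w o => rw [h.eq_of_top, h'.eq_of_top]
  | bot v r e => rw [h.eq_of_bot hB, h'.eq_of_bot hB']

lemma ElemF.isFace_of_inner [Finite T] (hch : IicIsChain T) (h : ElemF (.inner e) A B)
    (hB : IsFace L B) : IsFace L A := by
  obtain ⟨r, hr⟩ := hB.2.1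
  obtain ⟨⟨hev, oe, hoe, hin⟩, hE, hV⟩ := id h
  have hre : r < e := (hr.2 oe (hB.vert_subset hoe)).trans_lt hin.2.1
  refine hB.of_vert_subset h.vert_subset (hr.of_subset h.edges_subset ?_) ?_ ?_ ?_
  · rw [hE]; exact ⟨hr.1, hre.ne⟩
  · rw [hE, hV]; exact Set.sdiff_subset_sdiff_left hB.vert_subset
  · rintro x hx ⟨y, hy, hxy⟩
    rw [hE] at hx hy; rw [hV]
    exact ⟨hB.mem_vert_of_lt hx.1 hy.1 hxy, hx.2⟩
  · intro o ho
    rw [hV] at ho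
    by_cases hem : e ∈ Inps B o
    · rw [h.inps_of_inner_merge hch hem]
      exact (hB.isOpIn o ho.1).sdiff_union hem (hB.isOpIn e hev)
    · rw [h.inps_of_inner hB hem]
      exact hB.isOpIn o ho.1

lemma ElemF.isFace_of_top [Finite T] (hch : IicIsChain T) (h : ElemF (.top w o) A B)
    (hB : IsFace L B) : IsFace L A := by
  obtain ⟨r, hr⟩ := hB.2.1
  obtain ⟨hov, hw, hwnv, hE, hV⟩ := id h
  refine hB.of_vert_subset h.vert_subset (hr.of_subset h.edges_subset ?_) ?_ ?_ ?_
  · rw [hE, hw]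
    exact ⟨hr.1, fun hc => (hc.2.1.trans_le (hr.2 o (hB.vert_subset hov))).false⟩
  · rw [hV, hE]
    exact fun x hx => ⟨hB.vert_subset hx.1, fun hc => hwnv x hc hx.1⟩
  · rintro x hx ⟨y, hy, hxy⟩
    rw [hE] at hx hy; rw [hV]
    refine ⟨hB.mem_vert_of_lt hx.1 hy.1 hxy, ?_⟩
    rintro rfl
    obtain ⟨z, hz, hzy⟩ := exists_inputOf_le hy.1 hxy
    have hzw : z ∈ w := hw ▸ hz
    rcases hzy.lt_or_eq with hlt | rfl
    · exact hwnv z hzw (hB.mem_vert_of_lt hz.1 hy.1 hlt)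
    · exact hy.2 hzw
  · intro x hx
    rw [hV] at hx
    rw [h.inps_of_top hch hB (hB.vert_subset hx.1) hx.2]
    exact hB.isOpIn x hx.1

lemma ElemF.isFace_of_bot [Finite T] (h : ElemF (.bot v r e) A B) (hB : IsFace L B) :
    IsFace L A := by
  obtain ⟨hr, -, hv, hev, -, hE, hV⟩ := id h
  have hein : InputOf B e r := by rw [hv] at hev; exact hev
  have hre : r < e := hein.2.1
  refine hB.of_vert_subset h.vert_subset (r := e) ⟨?_, fun x hx => ?_⟩ ?_ ?_ ?_
  · rw [hE]; exact ⟨hein.1, le_rfl⟩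
  · rw [hE] at hx; exact hx.2
  · rw [hV, hE]
    exact fun x hx => ⟨hB.vert_subset hx.1, h.le_of_bot_of_mem_vert hB hx.1 hx.2⟩
  · rintro x hx ⟨y, hy, hxy⟩
    rw [hE] at hx hy; rw [hV]
    exact ⟨hB.mem_vert_of_lt hx.1 hy.1 hxy, (hre.trans_le hx.2).ne'⟩
  · intro x hx
    rw [hV] at hx
    rw [h.inps_of_bot (h.le_of_bot_of_mem_vert hB hx.1 hx.2)]
    exact hB.isOpIn x hx.1

lemma ElemF.isFace [Finite T] (hch : IicIsChain T) (h : ElemF f A B) (hB : IsFace L B) :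
    IsFace L A := by
  cases f
  exacts [h.isFace_of_inner hch hB, h.isFace_of_top hch hB, h.isFace_of_bot hB]

end ElemF

section Composites

variable {L : Set T} {f g h : FLbl T} {P Q R X : PreTree T} {v w v₂ w₂ : Set T}
  {e o o' r e₂ o₂ r₂ : T}

lemma IsSeq.subset : ∀ {s : List (FLbl T × PreTree T × PreTree T)} {A B : PreTree T},
    IsSeq L A s B → A.edges ⊆ B.edges ∧ A.vert ⊆ B.vert
  | [], _, _, rfl => ⟨subset_rfl, subset_rfl⟩
  | _ :: _, _, _, ⟨rfl, hm, _, _, hs⟩ =>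
    ⟨hm.edges_subset.trans (IsSeq.subset hs).1, hm.vert_subset.trans (IsSeq.subset hs).2⟩

lemma IsSeq.nv_add_length [Finite T] : ∀ {s : List (FLbl T × PreTree T × PreTree T)}
    {A B : PreTree T}, IsSeq L A s B → nv A + s.length = nv B
  | [], _, _, rfl => rfl
  | _ :: _, _, _, ⟨rfl, hm, _, _, hs⟩ => by
    rw [List.length_cons, ← hs.nv_add_length, ← hm.nv_add_one]
    ring

lemma eq_of_isSeq_of_subtreeRel [Finite T] {U : PreTree T}
    {s₁ s₂ : List (FLbl T × PreTree T × PreTree T)} (hnv : nv Q + 1 = nv P)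
    (hcover : Q.edges ∪ X.edges = P.edges) (hQU : IsSeq L Q s₁ U) (hXU : IsSeq L X s₂ U)
    (hlen : 1 ≤ s₁.length) (hUP : SubtreeRel U P) : U = P := by
  have hedges : P.edges ⊆ U.edges := hcover ▸ Set.union_subset hQU.subset.1 hXU.subset.1
  have hnvU := hQU.nv_add_length
  exact PreTree.ext (hUP.1.antisymm hedges)
    (Set.eq_of_subset_of_ncard_le hUP.2.1 (by unfold nv at hnv hnvU; omega))

def CommSquare (f g : FLbl T) (R P : PreTree T) : Prop := ∃ X, ElemF g X P ∧ ElemF f R X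

def MixedCover (f : FLbl T) (Q R P : PreTree T) : Prop :=
  ∃ h k X, ElemF h X P ∧ ElemF k R X ∧ Q.edges ∪ X.edges = P.edges ∧ MixedPair f h P

lemma commSquare_of_elemF_face (hf : ElemF f Q P) (hg : ElemF g R Q)
    (hgP : ElemF g (g.face P) P) (hfP : ElemF f (f.face (g.face P)) (g.face P)) :
    CommSquare f g R P :=
  ⟨_, hgP, by rwa [hg.eq_face, hf.eq_face, FLbl.face_comm]⟩

lemma commSquare_inner_inner (hch : IicIsChain T) (hQ : IsFace L Q)
    (hf : ElemF (.inner e) Q P) (hg : ElemF (.inner e₂) R Q) :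
    CommSquare (.inner e) (.inner e₂) R P := by
  obtain ⟨⟨hev, oe, hoe, hin⟩, hE, -⟩ := id hf
  obtain ⟨⟨he₂v, o₂, ho₂, hin₂⟩, -⟩ := id hg
  have hQP := hf.edges_subset
  have hne : e ≠ e₂ := by
    rintro rfl
    have := hQ.vert_subset he₂v
    rw [hE] at this
    exact this.2 rfl
  have hQ_of_ne : ∀ z ∈ P.edges, z ≠ e → z ∈ Q.edges := fun z hz hze => by
    rw [hE]; exact ⟨hz, hze⟩
  refine commSquare_of_elemF_face hf hg ⟨⟨hf.vert_subset he₂v, ?_⟩, rfl, rfl⟩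
    ⟨⟨⟨hev, hne⟩, ?_⟩, rfl, rfl⟩
  · by_cases hcase : o₂ < e ∧ e < e₂
    · refine ⟨e, hev, hQP hin₂.1, hcase.2, fun ⟨z, hz, h1, h2⟩ => ?_⟩
      exact hin₂.2.2 ⟨z, hQ_of_ne z hz h1.ne', hcase.1.trans h1, h2⟩
    · refine ⟨o₂, hf.vert_subset ho₂, hin₂.of_superset hQP fun z hz h1 h2 => ?_⟩
      exact hQ_of_ne z hz fun hze => hcase ⟨hze ▸ h1, hze ▸ h2⟩
  · by_cases hoe₂ : oe = e₂
    · subst hoe₂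
      refine ⟨o₂, ⟨hf.vert_subset ho₂, hin₂.2.1.ne⟩, ⟨hin.1, hne⟩,
        hin₂.2.1.trans hin.2.1, fun ⟨z, hz, h1, h2⟩ => ?_⟩
      have hzo : z ≠ oe := hz.2
      rcases hch e z oe h2.le hin.2.1.le with hzo' | hoz
      · exact hin₂.2.2 ⟨z, hQ_of_ne z hz.1 h2.ne, h1, lt_of_le_of_ne hzo' hzo⟩
      · exact hin.2.2 ⟨z, hz.1, lt_of_le_of_ne hoz hzo.symm, h2⟩
    · exact ⟨oe, ⟨hoe, hoe₂⟩, hin.of_subset (fun x hx => hx.1) ⟨hin.1, hne⟩⟩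

lemma adjacentComp_inner_top (hch : IicIsChain T) (hf : ElemF (.inner e) Q P)
    (hg : ElemF (.top w₂ o₂) R Q) (he : InputOf P e o₂) :
    AdjacentComp (.top w₂ o₂) (.inner e) Q P := by
  obtain ⟨⟨hev, -⟩, -, hV⟩ := id hf
  obtain ⟨ho₂, rfl, hw₂nv, -⟩ := hg
  have hinps := hf.inps_of_inner_merge hch he
  have hleaf : ∀ x ∈ Inps Q o₂, x ≠ e → IsLeafOf P x := fun x hx hxe =>
    ⟨hf.edges_subset hx.1, fun hxP => hw₂nv x hx (by rw [hV]; exact ⟨hxP, hxe⟩)⟩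
  refine Or.inl ⟨e, o₂, ⟨hev, o₂, hf.vert_subset ho₂, he⟩, fun x hx => ?_,
    hf.vert_subset ho₂, he, fun x hx hxe => ?_, Or.inr rfl, rfl⟩
  · exact hleaf x (by rw [hinps]; exact Or.inr hx) hx.2.1.ne'
  · exact hleaf x (by rw [hinps]; exact Or.inl ⟨hx, hxe⟩) hxe

lemma commSquare_inner_top [Finite T] (hP : IsFace L P) (hQ : IsFace L Q)
    (hf : ElemF (.inner e) Q P) (hg : ElemF (.top w₂ o₂) R Q) (he : e ∉ Inps P o₂) :
    CommSquare (.inner e) (.top w₂ o₂) R P := by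
  obtain ⟨⟨hev, oe, hoe, hin⟩, hE, hV⟩ := id hf
  obtain ⟨ho₂, hw₂, hw₂nv, -⟩ := id hg
  have heQ : e ∉ Q.edges := by rw [hE]; exact fun hc => hc.2 rfl
  have hew₂ : e ∉ w₂ := fun hc => heQ (hw₂ ▸ hc : e ∈ Inps Q o₂).1
  have heo₂ : e ≠ o₂ := fun hc => heQ (hc ▸ hQ.vert_subset ho₂)
  refine commSquare_of_elemF_face hf hg
    ⟨hf.vert_subset ho₂, by rw [hw₂, hf.inps_of_inner hP he], fun x hxw hxv => ?_, rfl, rfl⟩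
    ⟨⟨⟨hev, heo₂⟩, oe, ⟨hoe, fun hc => he (hc ▸ hin)⟩,
      hin.of_subset (fun x hx => hx.1) ⟨hin.1, hew₂⟩⟩, rfl, rfl⟩
  exact hw₂nv x hxw (by rw [hV]; exact ⟨hxv, fun hc => hew₂ (hc ▸ hxw)⟩)

lemma commSquare_top_inner [Finite T] (hch : IicIsChain T) (hP : IsFace L P) (hQ : IsFace L Q)
    (hf : ElemF (.top w o) Q P) (hg : ElemF (.inner e₂) R Q) :
    CommSquare (.top w o) (.inner e₂) R P := by
  obtain ⟨hov, rfl, hwnv, hE, hV⟩ := id hf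
  obtain ⟨⟨he₂v, o₂, ho₂, hin₂⟩, -⟩ := id hg
  have he₂P : e₂ ∈ P.vert \ {o} := hV ▸ he₂v
  have ho₂P : o₂ ∈ P.vert \ {o} := hV ▸ ho₂
  have hoQ : o ∈ Q.edges := by
    rw [hE]; exact ⟨hP.vert_subset hov, fun hc => lt_irrefl o hc.2.1⟩
  have he₂w : e₂ ∉ Inps P o := fun hc => by
    have := hQ.vert_subset he₂v
    rw [hE] at this
    exact this.2 hc
  have hin₂P : InputOf P e₂ o₂ := hin₂.of_superset hf.edges_subset fun z hz h1 h2 => by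
    rw [hE]
    refine ⟨hz, fun hzw => ?_⟩
    have hzo : InputOf P z o := hzw
    exact hin₂.2.2 ⟨o, hoQ, hzo.lt_of_lt hch (hP.vert_subset ho₂P.1) h1 ho₂P.2, hzo.2.1.trans h2⟩
  have hinner : ElemF (.inner e₂) ((FLbl.inner e₂).face P) P :=
    ⟨⟨he₂P.1, o₂, ho₂P.1, hin₂P⟩, rfl, rfl⟩
  refine commSquare_of_elemF_face hf hg hinner
    ⟨⟨hov, fun hc => he₂P.2 hc.symm⟩, ?_, fun x hx hxv => hwnv x hx hxv.1, rfl, rfl⟩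
  rw [hinner.inps_of_inner hP he₂w]

lemma adjacentComp_top_top (hch : IicIsChain T) (hP : IsFace L P) (hf : ElemF (.top w o) Q P)
    (hg : ElemF (.top w₂ o₂) R Q) (ho : o ∈ w₂) : AdjacentComp (.top w₂ o₂) (.top w o) Q P := by
  obtain ⟨hov, rfl, hwnv, hE, hV⟩ := id hf
  obtain ⟨ho₂, rfl, hw₂nv, -⟩ := hg
  have ho₂P : o₂ ∈ P.vert \ {o} := hV ▸ ho₂
  have hinQ : InputOf Q o o₂ := ho
  have hinP : InputOf P o o₂ := hinQ.of_superset hf.edges_subset fun z hz _ h2 => by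
    rw [hE]
    exact ⟨hz, fun hzw => lt_asymm (show InputOf P z o from hzw).2.1 h2⟩
  refine Or.inl ⟨o, o₂, ⟨hov, o₂, ho₂P.1, hinP⟩, fun x hx => ⟨hx.1, hwnv x hx⟩,
    ho₂P.1, hinP, fun x hx hxo => ?_, Or.inl rfl, rfl⟩
  have hxw : ¬ InputOf P x o := fun hxw => hx.2.2
    ⟨o, hP.vert_subset hov, hxw.lt_of_lt hch (hP.vert_subset ho₂P.1) hx.2.1 ho₂P.2, hxw.2.1⟩
  have hxQ : x ∈ Q.edges := by rw [hE]; exact ⟨hx.1, hxw⟩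
  exact ⟨hx.1, fun hxv =>
    hw₂nv x (hx.of_subset hf.edges_subset hxQ) (by rw [hV]; exact ⟨hxv, hxo⟩)⟩

lemma commSquare_top_top [Finite T] (hch : IicIsChain T) (hP : IsFace L P)
    (hf : ElemF (.top w o) Q P) (hg : ElemF (.top w₂ o₂) R Q) (ho : o ∉ w₂) :
    CommSquare (.top w o) (.top w₂ o₂) R P := by
  obtain ⟨hov, hw, hwnv, -, hV⟩ := id hf
  obtain ⟨ho₂, hw₂, hw₂nv, -⟩ := id hg
  have ho₂P : o₂ ∈ P.vert \ {o} := hV ▸ ho₂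
  have htop : ElemF (.top w₂ o₂) ((FLbl.top w₂ o₂).face P) P :=
    ⟨ho₂P.1, by rw [hw₂, hf.inps_of_top hch hP (hP.vert_subset ho₂P.1) ho₂P.2],
      fun x hxw hxv => hw₂nv x hxw (by rw [hV]; exact ⟨hxv, fun hc => ho (hc ▸ hxw)⟩), rfl, rfl⟩
  refine commSquare_of_elemF_face hf hg htop
    ⟨⟨hov, fun hc => ho₂P.2 hc.symm⟩, ?_, fun x hx hxv => hwnv x hx hxv.1, rfl, rfl⟩
  rw [hw, htop.inps_of_top hch hP (hP.vert_subset hov) fun hc => ho₂P.2 hc.symm]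

lemma ElemF.edges_union_eq (hf : ElemF f Q P) (hh : ElemF h X P)
    (hmiss : ∀ x ∈ P.edges, x ∉ X.edges → x ∈ Q.edges) : Q.edges ∪ X.edges = P.edges :=
  (Set.union_subset hf.edges_subset hh.edges_subset).antisymm fun x hx =>
    (em (x ∈ X.edges)).elim Or.inr fun hxX => Or.inl (hmiss x hx hxX)

lemma ElemF.rootOf_bot (hf : ElemF (.bot v r e) Q P) : RootOf Q e := by
  obtain ⟨-, -, rfl, hev, -, hE, -⟩ := hf
  exact ⟨by rw [hE]; exact ⟨hev.1, le_rfl⟩, fun x hx => by rw [hE] at hx; exact hx.2⟩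

lemma ElemF.rootOf_of_inner (hf : ElemF (.inner e) Q P) (hP : IsFace L P) (hr : RootOf Q r) :
    RootOf P r := by
  obtain ⟨⟨-, oe, hoe, hin⟩, hE, -⟩ := id hf
  have hoeQ : oe ∈ Q.edges := by rw [hE]; exact ⟨hP.vert_subset hoe, hin.2.1.ne⟩
  refine ⟨hf.edges_subset hr.1, fun x hx => ?_⟩
  by_cases hxe : x = e
  · exact hxe ▸ (hr.2 oe hoeQ).trans hin.2.1.le
  · exact hr.2 x (by rw [hE]; exact ⟨hx, hxe⟩)

lemma ElemF.rootOf_of_top (hf : ElemF (.top w o) Q P) (hP : IsFace L P) (hr : RootOf Q r) :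
    RootOf P r := by
  obtain ⟨hov, rfl, -, hE, -⟩ := id hf
  have hoQ : o ∈ Q.edges := by rw [hE]; exact ⟨hP.vert_subset hov, fun hc => lt_irrefl o hc.2.1⟩
  refine ⟨hf.edges_subset hr.1, fun x hx => ?_⟩
  by_cases hxw : InputOf P x o
  · exact (hr.2 o hoQ).trans hxw.2.1.le
  · exact hr.2 x (by rw [hE]; exact ⟨hx, hxw⟩)

lemma mixedOrd_top_inner (hov : o ∈ P.vert) (hleaf : ∀ x ∈ Inps P o, x ∉ P.vert)
    (hin : InputOf P o o') (ho' : o' ∈ P.vert) : MixedOrd (.top (Inps P o) o) (.inner o) P := by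
  refine ⟨o, o, rfl, ⟨hov, o', ho', hin⟩, Or.inl rfl, Or.inl rfl, ?_⟩
  rintro e' ⟨he'v, -⟩ (rfl | hatt)
  · rfl
  · exact absurd he'v (hleaf e' hatt)

lemma mixedOrd_bot_inner (hP : IsFace L P) (hr : RootOf P r) (hrv : r ∈ P.vert)
    (hev : e ∈ P.vert) (hein : InputOf P e r) (hleaf : ∀ x ∈ Inps P r, x ≠ e → x ∉ P.vert) :
    MixedOrd (.bot (Inps P r) r e) (.inner e) P := by
  refine ⟨e, r, rfl, ⟨hev, r, hrv, hein⟩, Or.inr ⟨e, rfl, hr⟩, Or.inr hein, ?_⟩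
  rintro e' ⟨he'v, o', ho', hin'⟩ (rfl | hatt)
  · exact absurd (hr.2 o' (hP.vert_subset ho')) hin'.2.1.not_ge
  · by_contra he'e
    exact hleaf e' hatt he'e he'v

lemma commSquare_bot_inner [Finite T] (hP : IsFace L P) (hQ : IsFace L Q)
    (hf : ElemF (.bot v r e) Q P) (hg : ElemF (.inner e₂) R Q) :
    CommSquare (.bot v r e) (.inner e₂) R P := by
  obtain ⟨hr, hrv, rfl, hev, hcond, hE, -⟩ := id hf
  obtain ⟨⟨he₂v, o₂, ho₂, hin₂⟩, -⟩ := id hg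
  have hein : InputOf P e r := hev
  have heo₂ : e ≤ o₂ := by
    have := hQ.vert_subset ho₂
    rw [hE] at this
    exact this.2
  have hee₂ : e < e₂ := heo₂.trans_lt hin₂.2.1
  have hinner : ElemF (.inner e₂) ((FLbl.inner e₂).face P) P :=
    ⟨⟨hf.vert_subset he₂v, o₂, hf.vert_subset ho₂, hin₂.of_superset hf.edges_subset
      fun z hz h1 _ => by rw [hE]; exact ⟨hz, heo₂.trans h1.le⟩⟩, rfl, rfl⟩
  have hinps : Inps ((FLbl.inner e₂).face P) r = Inps P r :=
    hinner.inps_of_inner hP fun hc => hc.2.2 ⟨e, hein.1, hein.2.1, hee₂⟩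
  have hre₂ : r ≠ e₂ := (hein.2.1.trans hee₂).ne
  refine commSquare_of_elemF_face hf hg hinner ⟨hr.of_subset (fun x hx => hx.1) ⟨hr.1, hre₂⟩,
    ⟨hrv, hre₂⟩, hinps.symm, hev,
    fun x hx hxe hxv => hcond x hx hxe hxv.1, rfl, rfl⟩

lemma commSquare_bot_top [Finite T] (hch : IicIsChain T) (hP : IsFace L P) (hQ : IsFace L Q)
    (hf : ElemF (.bot v r e) Q P) (hg : ElemF (.top w₂ o₂) R Q) :
    CommSquare (.bot v r e) (.top w₂ o₂) R P := by
  obtain ⟨hr, hrv, rfl, hev, hcond, hE, hV⟩ := id hf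
  obtain ⟨ho₂, hw₂, hw₂nv, -⟩ := id hg
  have hein : InputOf P e r := hev
  have ho₂P : o₂ ∈ P.vert \ {r} := hV ▸ ho₂
  have heo₂ : e ≤ o₂ := by
    have := hQ.vert_subset ho₂
    rw [hE] at this
    exact this.2
  have hw₂P : w₂ = Inps P o₂ := by rw [hw₂, hf.inps_of_bot heo₂]
  have hrw₂ : ∀ x ∈ w₂, r < x := fun x hx =>
    hein.2.1.trans_le (heo₂.trans (show x ∈ Inps P o₂ from hw₂P ▸ hx).2.1.le)
  have htop : ElemF (.top w₂ o₂) ((FLbl.top w₂ o₂).face P) P :=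
    ⟨ho₂P.1, hw₂P, fun x hxw hxv =>
      hw₂nv x hxw (by rw [hV]; exact ⟨hxv, (hrw₂ x hxw).ne'⟩), rfl, rfl⟩
  have hinps : Inps ((FLbl.top w₂ o₂).face P) r = Inps P r :=
    htop.inps_of_top hch hP hr.1 fun hc => ho₂P.2 hc.symm
  refine commSquare_of_elemF_face hf hg htop
    ⟨hr.of_subset (fun x hx => hx.1) ⟨hr.1, fun hc => (hrw₂ r hc).false⟩,
      ⟨hrv, fun hc => ho₂P.2 hc.symm⟩, hinps.symm, hev,
      fun x hx hxe hxv => hcond x hx hxe hxv.1, rfl, rfl⟩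

lemma mixedCover_bot_bot (hch : IicIsChain T) (hP : IsFace L P) (hf : ElemF (.bot v r e) Q P)
    (hg : ElemF (.bot v₂ r₂ e₂) R Q) : MixedCover (.bot v r e) Q R P := by
  obtain ⟨hr, hrv, rfl, hev, hcond, hE, hV⟩ := id hf
  obtain rfl : e = r₂ := (hg.1.unique hf.rootOf_bot).symm
  obtain ⟨-, heQ, rfl, he₂v, hcond₂, hE₂, hV₂⟩ := id hg
  have hein : InputOf P e r := hev
  have heP : e ∈ P.vert \ {r} := hV ▸ heQ
  have hinps : Inps Q e = Inps P e := hf.inps_of_bot le_rfl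
  have hinner : ElemF (.inner e) ((FLbl.inner e).face P) P := ⟨⟨heP.1, r, hrv, hein⟩, rfl, rfl⟩
  refine ⟨.inner e, .bot ((Inps P r \ {e}) ∪ Inps Q e) r e₂, _, hinner,
    ⟨hr.of_subset (fun x hx => hx.1) ⟨hr.1, hein.2.1.ne⟩, ⟨hrv, hein.2.1.ne⟩,
      by rw [hinner.inps_of_inner_merge hch hein, hinps], Or.inr he₂v, ?_, ?_, ?_⟩,
    hf.edges_union_eq hinner fun x hx hxX => ?_,
    Or.inl (mixedOrd_bot_inner hP hr hrv heP.1 hein hcond)⟩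
  · rintro x (⟨hx, hxe⟩ | hx) hxe₂ hxv
    · exact hcond x hx hxe hxv.1
    · exact hcond₂ x hx hxe₂
        (by rw [hV]; exact ⟨hxv.1, (hein.2.1.trans (hinps ▸ hx : x ∈ Inps P e).2.1).ne'⟩)
  · rw [hE₂, hE]
    ext x
    simp only [Set.mem_ofPred_eq]
    exact ⟨fun ⟨⟨hxP, _⟩, hx⟩ => ⟨⟨hxP, fun hc => he₂v.2.1.not_ge (hc ▸ hx)⟩, hx⟩,
      fun ⟨⟨hxP, _⟩, hx⟩ => ⟨⟨hxP, he₂v.2.1.le.trans hx⟩, hx⟩⟩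
  · rw [hV₂, hV, Set.sdiff_sdiff_comm]
    rfl
  · rw [hE]
    exact ⟨hx, (not_not.1 fun hxe => hxX ⟨hx, hxe⟩) ▸ le_rfl⟩

lemma commSquare_inner_bot [Finite T] (hch : IicIsChain T) (hP : IsFace L P)
    (hf : ElemF (.inner e) Q P) (hg : ElemF (.bot v₂ r e₂) R Q) (he : ¬ InputOf P e r) :
    CommSquare (.inner e) (.bot v₂ r e₂) R P := by
  obtain ⟨⟨hev, oe, hoe, hin⟩, hE, hV⟩ := id hf
  have hr : RootOf P r := hf.rootOf_of_inner hP hg.1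
  obtain ⟨-, hrv, rfl, he₂v, hcond₂, -⟩ := id hg
  have hrP : r ∈ P.vert \ {e} := hV ▸ hrv
  have hinps : Inps Q r = Inps P r := hf.inps_of_inner hP he
  rw [hinps] at hg he₂v hcond₂ ⊢
  have hbot : ElemF (.bot (Inps P r) r e₂) ((FLbl.bot (Inps P r) r e₂).face P) P :=
    ⟨hr, hrP.1, rfl, he₂v, fun x hx hxe₂ hxv => hcond₂ x hx hxe₂
      (by rw [hV]; exact ⟨hxv, fun hc => he (hc ▸ hx)⟩), rfl, rfl⟩
  have he₂e : e₂ ≤ e := by_contra fun h =>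
    he (hbot.mem_of_bot_of_not_le hP (hP.vert_subset hev) (fun hc => hrP.2 hc.symm) h).1.1
  have he₂oe : e₂ ≤ oe := (hch e oe e₂ hin.2.1.le he₂e).elim
    (fun h => h.eq_or_lt.elim (fun h => h.ge) fun hlt =>
      (hin.2.2 ⟨e₂, he₂v.1, hlt, lt_of_le_of_ne he₂e fun h => he (h ▸ he₂v)⟩).elim) id
  refine commSquare_of_elemF_face hf hg hbot ⟨⟨⟨hev, fun hc => hrP.2 hc.symm⟩, oe,
    ⟨hoe, (he₂v.2.1.trans_le he₂oe).ne'⟩, hin.of_subset (fun x hx => hx.1) ⟨hin.1, he₂e⟩⟩,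
    rfl, rfl⟩

lemma mixedCover_inner_bot_of_inputOf (hch : IicIsChain T) (hP : IsFace L P)
    (hf : ElemF (.inner e) Q P) (hg : ElemF (.bot v₂ r e₂) R Q) (he : InputOf P e r)
    (he₂ : InputOf P e₂ e) : MixedCover (.inner e) Q R P := by
  obtain ⟨⟨hev, -⟩, hE, hV⟩ := id hf
  have hr : RootOf P r := hf.rootOf_of_inner hP hg.1
  obtain ⟨-, hrv, rfl, -, hcond₂, hE₂, hV₂⟩ := id hg
  have hrP : r ∈ P.vert \ {e} := hV ▸ hrv
  have hinps := hf.inps_of_inner_merge hch he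
  have hleaf : ∀ x ∈ Inps P r, x ≠ e → x ∉ P.vert := fun x hx hxe hxv =>
    hcond₂ x (hinps ▸ Or.inl ⟨hx, hxe⟩) (by rintro rfl; exact hx.2.2 ⟨e, he.1, he.2.1, he₂.2.1⟩)
      (by rw [hV]; exact ⟨hxv, hxe⟩)
  have hbot : ElemF (.bot (Inps P r) r e) ((FLbl.bot (Inps P r) r e).face P) P :=
    ⟨hr, hrP.1, rfl, he, hleaf, rfl, rfl⟩
  have hinpsX : Inps ((FLbl.bot (Inps P r) r e).face P) e = Inps P e := hbot.inps_of_bot le_rfl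
  refine ⟨.bot (Inps P r) r e, .bot (Inps ((FLbl.bot (Inps P r) r e).face P) e) e e₂, _, hbot,
    ⟨hbot.rootOf_bot, ⟨hev, he.2.1.ne'⟩, rfl, hinpsX ▸ he₂, fun x hx hxe₂ hxv => ?_, ?_, ?_⟩,
    hf.edges_union_eq hbot fun x hx hxX => ?_, Or.inr (mixedOrd_bot_inner hP hr hrP.1 hev he hleaf)⟩
  · rw [hinpsX] at hx
    exact hcond₂ x (hinps ▸ Or.inr hx) hxe₂ (by rw [hV]; exact ⟨hxv.1, hx.2.1.ne'⟩)
  · rw [hE₂, hE]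
    ext x
    simp only [Set.mem_ofPred_eq]
    exact ⟨fun ⟨⟨hxP, _⟩, hx⟩ => ⟨⟨hxP, he₂.2.1.le.trans hx⟩, hx⟩,
      fun ⟨⟨hxP, _⟩, hx⟩ => ⟨⟨hxP, fun hc => he₂.2.1.not_ge ((show x = e from hc) ▸ hx)⟩, hx⟩⟩
  · rw [hV₂, hV, Set.sdiff_sdiff_comm]
    rfl
  · rw [hE]
    exact ⟨hx, fun hc => hxX ⟨hx, (show x = e from hc) ▸ le_rfl⟩⟩

lemma mixedCover_inner_bot_of_not_inputOf (hch : IicIsChain T) (hP : IsFace L P)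
    (hf : ElemF (.inner e) Q P) (hg : ElemF (.bot v₂ r e₂) R Q) (he : InputOf P e r)
    (he₂ : ¬ InputOf P e₂ e) : MixedCover (.inner e) Q R P := by
  obtain ⟨⟨hev, -⟩, hE, hV⟩ := id hf
  have hr : RootOf P r := hf.rootOf_of_inner hP hg.1
  obtain ⟨-, hrv, rfl, he₂v, hcond₂, hE₂, hV₂⟩ := id hg
  have hrP : r ∈ P.vert \ {e} := hV ▸ hrv
  have hinps := hf.inps_of_inner_merge hch he
  have he₂r : e₂ ∈ Inps P r \ {e} := by
    rw [hinps] at he₂v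
    exact he₂v.resolve_right he₂
  have hleaf : ∀ x ∈ Inps P e, x ∉ P.vert := fun x hx hxv =>
    hcond₂ x (hinps ▸ Or.inr hx) (by rintro rfl; exact he₂ hx) (by rw [hV]; exact ⟨hxv, hx.2.1.ne'⟩)
  have htop : ElemF (.top (Inps P e) e) ((FLbl.top (Inps P e) e).face P) P :=
    ⟨hev, rfl, hleaf, rfl, rfl⟩
  have hinpsX : Inps ((FLbl.top (Inps P e) e).face P) r = Inps P r :=
    htop.inps_of_top hch hP hr.1 hrP.2
  -- `e` and `e₂` are distinct inputs of the root vertex, hence incomparable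
  have habove : ∀ x, e₂ ≤ x → ¬ e ≤ x := fun x => he₂r.1.not_le_of_le hch he he₂r.2
  refine ⟨.top (Inps P e) e, .bot (Inps ((FLbl.top (Inps P e) e).face P) r) r e₂, _, htop,
    ⟨hr.of_subset (fun x hx => hx.1) ⟨hr.1, fun hc => lt_asymm hc.2.1 he.2.1⟩, hrP, rfl,
      hinpsX ▸ he₂r.1, fun x hx hxe₂ hxv => ?_, ?_, ?_⟩,
    hf.edges_union_eq htop fun x hx hxX => ?_, Or.inr (mixedOrd_top_inner hev hleaf he hrP.1)⟩
  · rw [hinpsX] at hx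
    exact hcond₂ x (hinps ▸ Or.inl ⟨hx, hxv.2⟩) hxe₂ (hV ▸ hxv)
  · rw [hE₂, hE]
    ext x
    simp only [Set.mem_ofPred_eq]
    exact ⟨fun ⟨⟨hxP, _⟩, hx⟩ => ⟨⟨hxP, fun hc => habove x hx hc.2.1.le⟩, hx⟩,
      fun ⟨⟨hxP, _⟩, hx⟩ => ⟨⟨hxP, fun hc => habove x hx (le_of_eq (show x = e from hc).symm)⟩, hx⟩⟩
  · rw [hV₂, hV]
    rfl
  · rw [hE]
    exact ⟨hx, (not_not.1 fun h => hxX ⟨hx, h⟩ : InputOf P x e).2.1.ne'⟩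

lemma commSquare_top_bot [Finite T] (hch : IicIsChain T) (hP : IsFace L P)
    (hf : ElemF (.top w o) Q P) (hg : ElemF (.bot v₂ r e₂) R Q) (ho : InputOf P o r → e₂ = o) :
    CommSquare (.top w o) (.bot v₂ r e₂) R P := by
  obtain ⟨hov, rfl, hwnv, -, hV⟩ := id hf
  have hr : RootOf P r := hf.rootOf_of_top hP hg.1
  obtain ⟨-, hrv, rfl, he₂v, hcond₂, -⟩ := id hg
  have hrP : r ∈ P.vert \ {o} := hV ▸ hrv
  have hinps : Inps Q r = Inps P r := hf.inps_of_top hch hP hr.1 hrP.2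
  rw [hinps] at hg he₂v hcond₂ ⊢
  have hbot : ElemF (.bot (Inps P r) r e₂) ((FLbl.bot (Inps P r) r e₂).face P) P :=
    ⟨hr, hrP.1, rfl, he₂v, fun x hx hxe₂ hxv => hcond₂ x hx hxe₂
      (by rw [hV]; exact ⟨hxv, fun hc => hxe₂ (hc ▸ (ho (hc ▸ hx)).symm)⟩), rfl, rfl⟩
  have he₂o : e₂ ≤ o := by_contra fun h =>
    have hor := hbot.mem_of_bot_of_not_le hP (hP.vert_subset hov) (fun hc => hrP.2 hc.symm) h
    hor.1.2 (ho hor.1.1).symm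
  exact commSquare_of_elemF_face hf hg hbot ⟨⟨hov, fun hc => hrP.2 hc.symm⟩,
    (hbot.inps_of_bot he₂o).symm, fun x hx hxv => hwnv x hx hxv.1, rfl, rfl⟩

lemma mixedCover_top_bot (hch : IicIsChain T) (hP : IsFace L P) (hf : ElemF (.top w o) Q P)
    (hg : ElemF (.bot v₂ r e₂) R Q) (ho : InputOf P o r) (hne : e₂ ≠ o) :
    MixedCover (.top w o) Q R P := by
  obtain ⟨hov, rfl, hwnv, hE, hV⟩ := id hf
  have hr : RootOf P r := hf.rootOf_of_top hP hg.1
  obtain ⟨-, hrv, rfl, he₂v, hcond₂, hE₂, hV₂⟩ := id hg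
  have hrP : r ∈ P.vert \ {o} := hV ▸ hrv
  have hinps : Inps Q r = Inps P r := hf.inps_of_top hch hP hr.1 hrP.2
  have he₂ : InputOf P e₂ r := (hinps ▸ he₂v : e₂ ∈ Inps P r)
  have hinner : ElemF (.inner o) ((FLbl.inner o).face P) P := ⟨⟨hov, r, hrP.1, ho⟩, rfl, rfl⟩
  have hinpsX := hinner.inps_of_inner_merge hch ho
  -- `o` and `e₂` are distinct inputs of the root vertex, hence incomparable
  have habove : ∀ x, e₂ ≤ x → ¬ o ≤ x := fun x => he₂.not_le_of_le hch ho hne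
  refine ⟨.inner o, .bot (Inps ((FLbl.inner o).face P) r) r e₂, _, hinner,
    ⟨hr.of_subset (fun x hx => hx.1) ⟨hr.1, hrP.2⟩, hrP, rfl, hinpsX ▸ Or.inl ⟨he₂, hne⟩,
      fun x hx hxe₂ hxv => ?_, ?_, ?_⟩,
    hf.edges_union_eq hinner fun x hx hxX => ?_, Or.inl (mixedOrd_top_inner hov hwnv ho hrP.1)⟩
  · rw [hinpsX] at hx
    rcases hx with ⟨hx, -⟩ | hx
    · exact hcond₂ x (hinps ▸ hx) hxe₂ (hV ▸ hxv)
    · exact hwnv x hx hxv.1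
  · rw [hE₂, hE]
    ext x
    simp only [Set.mem_ofPred_eq]
    exact ⟨fun ⟨⟨hxP, _⟩, hx⟩ =>
        ⟨⟨hxP, fun hc => habove x hx (le_of_eq (show x = o from hc).symm)⟩, hx⟩,
      fun ⟨⟨hxP, _⟩, hx⟩ => ⟨⟨hxP, fun hc => habove x hx (show InputOf P x o from hc).2.1.le⟩, hx⟩⟩
  · rw [hV₂, hV]
    rfl
  · rw [hE]
    obtain rfl : x = o := not_not.1 fun h => hxX ⟨hx, h⟩
    exact ⟨hx, fun hc => lt_irrefl x (show InputOf P x x from hc).2.1⟩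

theorem commSquare_or_adjacentComp_or_mixedCover [Finite T] (hch : IicIsChain T)
    (hP : IsFace L P) (hQ : IsFace L Q) (hf : ElemF f Q P) (hg : ElemF g R Q) :
    CommSquare f g R P ∨ AdjacentComp g f Q P ∨ MixedCover f Q R P := by
  cases f with
  | inner e =>
    cases g with
    | inner e₂ => exact Or.inl (commSquare_inner_inner hch hQ hf hg)
    | top w₂ o₂ =>
      by_cases he : InputOf P e o₂
      · exact Or.inr (Or.inl (adjacentComp_inner_top hch hf hg he))
      · exact Or.inl (commSquare_inner_top hP hQ hf hg he)
    | bot v₂ r e₂ =>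
      by_cases he : InputOf P e r
      · by_cases he₂ : InputOf P e₂ e
        · exact Or.inr (Or.inr (mixedCover_inner_bot_of_inputOf hch hP hf hg he he₂))
        · exact Or.inr (Or.inr (mixedCover_inner_bot_of_not_inputOf hch hP hf hg he he₂))
      · exact Or.inl (commSquare_inner_bot hch hP hf hg he)
  | top w o =>
    cases g with
    | inner e₂ => exact Or.inl (commSquare_top_inner hch hP hQ hf hg)
    | top w₂ o₂ =>
      by_cases ho : o ∈ w₂
      · exact Or.inr (Or.inl (adjacentComp_top_top hch hP hf hg ho))
      · exact Or.inl (commSquare_top_top hch hP hf hg ho)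
    | bot v₂ r e₂ =>
      by_cases ho : InputOf P o r ∧ e₂ ≠ o
      · exact Or.inr (Or.inr (mixedCover_top_bot hch hP hf hg ho.1 ho.2))
      · exact Or.inl (commSquare_top_bot hch hP hf hg fun h => not_not.1 fun hne => ho ⟨h, hne⟩)
  | bot v r e =>
    cases g with
    | inner e₂ => exact Or.inl (commSquare_bot_inner hP hQ hf hg)
    | top w₂ o₂ => exact Or.inl (commSquare_bot_top hch hP hQ hf hg)
    | bot v₂ r₂ e₂ => exact Or.inr (Or.inr (mixedCover_bot_bot hch hP hf hg))

end Composites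

section ExtSet

variable {L : Set T} {Missing : Set (PreTree T)} {F : Set (FLbl T × PreTree T × PreTree T)}
  {pord : FLbl T → FLbl T → Prop} {f g h k : FLbl T} {P Q R X P₁ P₂ Q₁ Q₂ : PreTree T}

lemma ExtSet.mem_of_commSquare [Finite T] (hF : ExtSet L Missing F) (hch : IicIsChain T)
    (hfF : (f, Q, P) ∈ F) (hgF : (g, R, Q) ∈ F) (hgX : ElemF g X P) (hfX : ElemF f R X) :
    (g, X, P) ∈ F ∧ (f, R, X) ∈ F := by
  obtain ⟨hf, hQ, hP, -⟩ := hF.1 _ hfF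
  obtain ⟨hg, hR, -⟩ := hF.1 _ hgF
  obtain ⟨hfRX, -, -, hgXP⟩ := hF.2.2.2.2.2.1 f g P Q X R hf hgX hg hfX hP hQ
    (hgX.isFace hch hP) hR (Or.inr hfF) (Or.inl hgF)
  exact ⟨hgXP, hfRX⟩

/-- `P` is the smallest common extension of `Q` and `X`, so (F4), applied to `∂_g ∈ F` and the
extension `∂_k` of `R` to `X`, puts `∂_h` into `F`. -/
lemma ExtSet.mem_of_cover [Finite T] (hF : ExtSet L Missing F) (hch : IicIsChain T)
    (hfF : (f, Q, P) ∈ F) (hgF : (g, R, Q) ∈ F) (hhX : ElemF h X P) (hkX : ElemF k R X)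
    (hcover : Q.edges ∪ X.edges = P.edges) : (h, X, P) ∈ F := by
  obtain ⟨hf, hQ, hP, -⟩ := hF.1 _ hfF
  have hX : IsFace L X := hhX.isFace hch hP
  have hQP : IsSeq L Q [(f, Q, P)] P := ⟨rfl, hf, hQ, hP, rfl⟩
  have hXP : IsSeq L X [(h, X, P)] P := ⟨rfl, hhX, hX, hP, rfl⟩
  exact hF.2.2.2.2.2.2.1 g R Q hgF k X hkX hX P ⟨hP, _, _, hQP, hXP, rfl, le_rfl⟩
    (fun _ ⟨_, _, _, hQU, hXU, _, hlen⟩ hUP =>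
      eq_of_isSeq_of_subtreeRel hf.nv_add_one hcover hQU hXU hlen hUP)
    _ hXP _ (List.mem_singleton_self _)

theorem ExtSet.canon_eq_iff [Finite T] (hF : ExtSet L Missing F)
    (hanti : ∀ f g, pord f g → pord g f → f = g) (h₁ : Canon F pord Q₁ P₁)
    (h₂ : Canon F pord Q₂ P₂) : P₁ = P₂ ↔ Q₁ = Q₂ := by
  obtain ⟨f₁, hf₁, hmin₁, hext₁⟩ := h₁
  obtain ⟨f₂, hf₂, hmin₂, hext₂⟩ := h₂
  constructor
  · rintro rfl
    obtain rfl := hanti _ _ (hmin₁ f₂ Q₂ hf₂) (hmin₂ f₁ Q₁ hf₁)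
    exact (hF.1 _ hf₁).1.eq_face.trans (hF.1 _ hf₂).1.eq_face.symm
  · rintro rfl
    obtain rfl := hanti _ _ (hext₁ f₂ P₂ hf₂) (hext₂ f₁ P₁ hf₁)
    exact (hF.1 _ hf₁).1.right_unique (hF.1 _ hf₂).1 (hF.1 _ hf₁).2.2.1 (hF.1 _ hf₂).2.2.1

theorem ExtSet.not_canon_of_canon [Finite T] (hF : ExtSet L Missing F) (hch : IicIsChain T)
    (hanti : ∀ f g, pord f g → pord g f → f = g) (hQP : Canon F pord Q P) :
    ¬ Canon F pord R Q := by
  rintro ⟨g, hgF, -, hgext⟩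
  obtain ⟨f, hfF, hfmin, -⟩ := hQP
  obtain ⟨hf, hQ, hP, -⟩ := hF.1 _ hfF
  have hg := (hF.1 _ hgF).1
  rcases commSquare_or_adjacentComp_or_mixedCover hch hP hQ hf hg with
    ⟨X, hgX, hfX⟩ | hadj | ⟨h, k, X, hhX, hkX, hcover, hmixed⟩
  · obtain ⟨hgXF, hfXF⟩ := hF.mem_of_commSquare hch hfF hgF hgX hfX
    obtain rfl := hanti _ _ (hfmin g X hgXF) (hgext f X hfXF)
    exact hf.not_elemF hQ hg
  · exact hF.2.2.2.1 ⟨f, g, R, Q, P, hgF, hfF, hadj⟩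
  · exact hF.2.1 ⟨f, h, Q, X, P, hfF, hF.mem_of_cover hch hfF hgF hhX hkX hcover, hmixed⟩

end ExtSet

theorem stmt16_general {T : Type} [Fintype T] [PartialOrder T]
    (hchain : ∀ e s t : T, s ≤ e → t ≤ e → s ≤ t ∨ t ≤ s)
    (L : Set T)
    (Missing : Set (PreTree T))
    -- the compatible total order on labels induced by a planar structure
    (pord : FLbl T → FLbl T → Prop)
    (pord_antisymm : ∀ f g, pord f g → pord g f → f = g)
    (F : Set (FLbl T × PreTree T × PreTree T))
    (hF : ExtSet L Missing F) :
    (∀ Q₁ P₁ Q₂ P₂ : PreTree T, Canon F pord Q₁ P₁ → Canon F pord Q₂ P₂ →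
      (P₁ = P₂ ↔ Q₁ = Q₂)) ∧
    (∀ P Q R : PreTree T, Canon F pord Q P → ¬ Canon F pord R Q) :=
  ⟨fun _ _ _ _ => hF.canon_eq_iff pord_antisymm,
    fun _ _ _ => hF.not_canon_of_canon hchain pord_antisymm⟩

/-- Canonical extensions are disjoint: (1) for canonical extensions
`(Q₁, P₁)`, `(Q₂, P₂)` we have `P₁ = P₂` iff `Q₁ = Q₂`; (2) two composable pairs
`(∂_g ∂_f P, ∂_f P)` and `(∂_f P, P)` cannot both be canonical extensions. -/
theorem stmt16 {T : Type} [Fintype T] [PartialOrder T]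
    (rT : T) (hroot : ∀ t, rT ≤ t)
    (hchain : ∀ e s t : T, s ≤ e → t ≤ e → s ≤ t ∨ t ≤ s)
    (L : Set T) (hL : ∀ l ∈ L, IsMax l)
    (Missing : Set (PreTree T))
    -- `Missing` is the set of missing faces of a dendroidal subset `A ⊆ Ω[T]`
    (hA : ∀ P Q : PreTree T, IsFace L P → IsFace L Q → SubtreeRel P Q →
      P ∈ Missing → Q ∈ Missing)
    -- the compatible total order on labels induced by a planar structure
    (pord : FLbl T → FLbl T → Prop)
    (pord_refl : ∀ f, pord f f)
    (pord_trans : ∀ f g h, pord f g → pord g h → pord f h)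
    (pord_antisymm : ∀ f g, pord f g → pord g f → f = g)
    (pord_total : ∀ f g, pord f g ∨ pord g f)
    (F : Set (FLbl T × PreTree T × PreTree T))
    (hF : ExtSet L Missing F) :
    (∀ Q₁ P₁ Q₂ P₂ : PreTree T, Canon F pord Q₁ P₁ → Canon F pord Q₂ P₂ →
      (P₁ = P₂ ↔ Q₁ = Q₂)) ∧
    (∀ P Q R : PreTree T, Canon F pord Q P → ¬ Canon F pord R Q) :=
  stmt16_general hchain L Missing pord pord_antisymm F hF
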